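/- Let σ > 0 and φ(ζ) = √(2/π)·∫₀^{ζ/(2σ)} exp(-t²/2) dt. For any positive reals r₁,…,rₙ, ∏ᵢ φ(rᵢ) ≤ φ((∏ᵢ rᵢ)^{1/n})ⁿ, with equality if and only if all rᵢ are equal. -/

import Mathlib

/-!
Writing `ξ = log ζ`, the function `h = log ∘ φ ∘ exp` is strictly concave, and the claim is
Jensen's inequality for `h` at the points `log rᵢ` with equal weights, exponentiated. Strict
concavity follows from the derivative of `h` being `q (exp ξ / 2σ)` with
`q u = u F'(u) / F(u)` and `F u = ∫₀ᵘ exp (-t²/2)`: the sign of `q'` is that of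
`(1 - u²) F(u) - u F'(u)`, which vanishes at `0` and has derivative `-2u F(u) < 0`.
-/

noncomputable def phi (σ ζ : ℝ) : ℝ :=
  Real.sqrt (2/Real.pi) * ∫ t in (0:ℝ)..(ζ/(2*σ)), Real.exp (-t^2/2)

open Real Set

section GeomMean

open Finset

variable {ι : Type*} [Fintype ι] {f : ℝ → ℝ} {r : ι → ℝ}

lemma log_geom_mean (hr : ∀ i, 0 < r i) :
    log ((∏ i, r i) ^ ((1:ℝ) / Fintype.card ι)) =
      ∑ i, (1 / Fintype.card ι : ℝ) • log (r i) := by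
  rw [log_rpow (prod_pos fun i _ ↦ hr i), log_prod fun i _ ↦ (hr i).ne', mul_sum]
  rfl

lemma log_prod_apply_eq_card_mul [Nonempty ι] (hf_pos : ∀ x, 0 < x → 0 < f x)
    (hr : ∀ i, 0 < r i) :
    log (∏ i, f (r i)) =
      Fintype.card ι * ∑ i, (1 / Fintype.card ι : ℝ) • (log ∘ f ∘ exp) (log (r i)) := by
  have hn : (Fintype.card ι : ℝ) ≠ 0 := by positivity
  simp only [Function.comp_apply, exp_log (hr _), smul_eq_mul, ← mul_sum, ← mul_assoc,
    mul_one_div_cancel hn, one_mul]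
  exact log_prod fun i _ ↦ (hf_pos _ (hr i)).ne'

lemma log_pow_apply_geom_mean_eq_card_mul (hr : ∀ i, 0 < r i) :
    log (f ((∏ i, r i) ^ ((1:ℝ) / Fintype.card ι)) ^ Fintype.card ι) =
      Fintype.card ι * (log ∘ f ∘ exp) (∑ i, (1 / Fintype.card ι : ℝ) • log (r i)) := by
  rw [← log_geom_mean hr, Function.comp_apply, Function.comp_apply,
    exp_log (rpow_pos_of_pos (prod_pos fun i _ ↦ hr i) _), log_pow]

theorem prod_apply_le_apply_geom_mean_pow (hf_pos : ∀ x, 0 < x → 0 < f x)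
    (hf : ConcaveOn ℝ univ (log ∘ f ∘ exp)) (hr : ∀ i, 0 < r i) :
    ∏ i, f (r i) ≤ f ((∏ i, r i) ^ ((1:ℝ) / Fintype.card ι)) ^ Fintype.card ι := by
  rcases isEmpty_or_nonempty ι with hι | hι
  · simp
  have hG : 0 < (∏ i, r i) ^ ((1:ℝ) / Fintype.card ι) :=
    rpow_pos_of_pos (prod_pos fun i _ ↦ hr i) _
  rw [← log_le_log_iff (prod_pos fun i _ ↦ hf_pos _ (hr i)) (pow_pos (hf_pos _ hG) _),
    log_prod_apply_eq_card_mul hf_pos hr, log_pow_apply_geom_mean_eq_card_mul hr]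
  gcongr
  refine hf.le_map_sum (fun _ _ ↦ by positivity) ?_ (fun _ _ ↦ Set.mem_univ _)
  simp

theorem prod_apply_eq_apply_geom_mean_pow_iff (hf_pos : ∀ x, 0 < x → 0 < f x)
    (hf : StrictConcaveOn ℝ univ (log ∘ f ∘ exp)) (hr : ∀ i, 0 < r i) :
    ∏ i, f (r i) = f ((∏ i, r i) ^ ((1:ℝ) / Fintype.card ι)) ^ Fintype.card ι ↔
      ∀ i j, r i = r j := by
  rcases isEmpty_or_nonempty ι with hι | hι
  · simp
  have hG : 0 < (∏ i, r i) ^ ((1:ℝ) / Fintype.card ι) :=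
    rpow_pos_of_pos (prod_pos fun i _ ↦ hr i) _
  have hn : (Fintype.card ι : ℝ) ≠ 0 := by positivity
  rw [← log_injOn_pos.eq_iff (prod_pos fun i _ ↦ hf_pos _ (hr i)) (pow_pos (hf_pos _ hG) _),
    log_prod_apply_eq_card_mul hf_pos hr, log_pow_apply_geom_mean_eq_card_mul hr,
    mul_right_inj' hn, eq_comm,
    hf.map_sum_eq_iff_of_pos (fun _ _ ↦ by positivity) (by simp) (fun _ _ ↦ Set.mem_univ _)]
  simp only [Finset.mem_univ, true_implies]
  exact forall₂_congr fun i j ↦ log_injOn_pos.eq_iff (hr i) (hr j)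

end GeomMean

noncomputable def gaussIntegral (u : ℝ) : ℝ := ∫ t in (0:ℝ)..u, exp (-t ^ 2 / 2)

lemma continuous_exp_neg_sq_div_two : Continuous fun t : ℝ ↦ exp (-t ^ 2 / 2) := by fun_prop

lemma hasDerivAt_gaussIntegral (u : ℝ) : HasDerivAt gaussIntegral (exp (-u ^ 2 / 2)) u :=
  intervalIntegral.integral_hasDerivAt_right
    (continuous_exp_neg_sq_div_two.intervalIntegrable _ _)
    continuous_exp_neg_sq_div_two.aestronglyMeasurable.stronglyMeasurableAtFilter
    continuous_exp_neg_sq_div_two.continuousAt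

lemma gaussIntegral_pos {u : ℝ} (hu : 0 < u) : 0 < gaussIntegral u :=
  intervalIntegral.intervalIntegral_pos_of_pos
    (continuous_exp_neg_sq_div_two.intervalIntegrable _ _) (fun _ ↦ exp_pos _) hu

lemma hasDerivAt_mul_exp_neg_sq_div_two (u : ℝ) :
    HasDerivAt (fun u ↦ u * exp (-u ^ 2 / 2)) ((1 - u ^ 2) * exp (-u ^ 2 / 2)) u :=
  ((hasDerivAt_id' u).mul (((hasDerivAt_pow 2 u).neg.div_const 2).exp)).congr_deriv
    (by simp; ring)

lemma one_sub_sq_mul_gaussIntegral_lt {u : ℝ} (hu : 0 < u) :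
    (1 - u ^ 2) * gaussIntegral u < u * exp (-u ^ 2 / 2) := by
  set D : ℝ → ℝ := fun u ↦ u * exp (-u ^ 2 / 2) - (1 - u ^ 2) * gaussIntegral u
  have hD : ∀ u, HasDerivAt D (2 * u * gaussIntegral u) u := fun u ↦
    ((hasDerivAt_mul_exp_neg_sq_div_two u).sub
      (((hasDerivAt_pow 2 u).const_sub 1).mul (hasDerivAt_gaussIntegral u))).congr_deriv
      (by simp)
  have hD_mono : StrictMonoOn D (Ici 0) := by
    refine strictMonoOn_of_deriv_pos (convex_Ici 0)
      (fun x _ ↦ (hD x).continuousAt.continuousWithinAt) fun x hx ↦ ?_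
    rw [interior_Ici, mem_Ioi] at hx
    rw [(hD x).deriv]
    have := gaussIntegral_pos hx
    positivity
  have hD0 : D 0 = 0 := by simp [D, gaussIntegral]
  simpa only [hD0, D, sub_pos] using hD_mono self_mem_Ici hu.le hu

lemma strictAntiOn_mul_exp_div_gaussIntegral :
    StrictAntiOn (fun u ↦ u * exp (-u ^ 2 / 2) / gaussIntegral u) (Ioi 0) := by
  have hq : ∀ u, 0 < u → HasDerivAt (fun u ↦ u * exp (-u ^ 2 / 2) / gaussIntegral u)
      (exp (-u ^ 2 / 2) * ((1 - u ^ 2) * gaussIntegral u - u * exp (-u ^ 2 / 2))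
        / gaussIntegral u ^ 2) u := fun u hu ↦
    ((hasDerivAt_mul_exp_neg_sq_div_two u).div (hasDerivAt_gaussIntegral u)
      (gaussIntegral_pos hu).ne').congr_deriv (by ring)
  refine strictAntiOn_of_deriv_neg (convex_Ioi 0)
    (fun x hx ↦ (hq x hx).continuousAt.continuousWithinAt) fun x hx ↦ ?_
  rw [interior_Ioi, mem_Ioi] at hx
  rw [(hq x hx).deriv]
  exact div_neg_of_neg_of_pos (mul_neg_of_pos_of_neg (exp_pos _)
    (sub_neg.2 (one_sub_sq_mul_gaussIntegral_lt hx))) (pow_pos (gaussIntegral_pos hx) 2)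

lemma strictConcaveOn_log_gaussIntegral_mul_exp {a : ℝ} (ha : 0 < a) :
    StrictConcaveOn ℝ univ fun ξ ↦ log (gaussIntegral (a * exp ξ)) := by
  have hg : ∀ ξ, HasDerivAt (fun ξ ↦ log (gaussIntegral (a * exp ξ)))
      (a * exp ξ * exp (-(a * exp ξ) ^ 2 / 2) / gaussIntegral (a * exp ξ)) ξ := fun ξ ↦
    (((hasDerivAt_gaussIntegral _).comp ξ ((hasDerivAt_exp ξ).const_mul a)).log
      (gaussIntegral_pos (by positivity)).ne').congr_deriv
      (by simp only [Function.comp_apply]; ring)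
  refine StrictAnti.strictConcaveOn_univ_of_deriv
    (continuous_iff_continuousAt.2 fun ξ ↦ (hg ξ).continuousAt) fun x y hxy ↦ ?_
  rw [(hg x).deriv, (hg y).deriv]
  exact strictAntiOn_mul_exp_div_gaussIntegral (by simp; positivity) (by simp; positivity)
    (by gcongr)

lemma phi_eq (σ ζ : ℝ) : phi σ ζ = sqrt (2 / π) * gaussIntegral ((2 * σ)⁻¹ * ζ) := by
  rw [inv_mul_eq_div]; rfl

lemma phi_pos {σ ζ : ℝ} (hσ : 0 < σ) (hζ : 0 < ζ) : 0 < phi σ ζ := by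
  rw [phi_eq]
  exact mul_pos (sqrt_pos.2 (by positivity)) (gaussIntegral_pos (by positivity))

lemma strictConcaveOn_log_phi_exp {σ : ℝ} (hσ : 0 < σ) :
    StrictConcaveOn ℝ univ (log ∘ phi σ ∘ exp) := by
  have h_eq : log ∘ phi σ ∘ exp =
      (fun ξ ↦ log (gaussIntegral ((2 * σ)⁻¹ * exp ξ))) +
        fun _ ↦ log (sqrt (2 / π)) := by
    funext ξ
    rw [Function.comp_apply, Function.comp_apply, phi_eq, Pi.add_apply,
      log_mul (sqrt_pos.2 (by positivity)).ne' (gaussIntegral_pos (by positivity)).ne', add_comm]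
  rw [h_eq]
  exact (strictConcaveOn_log_gaussIntegral_mul_exp (by positivity)).add_const _

theorem stmt10_general (σ : ℝ) (hσ : 0 < σ) (n : ℕ)
    (r : Fin n → ℝ) (hr : ∀ i, 0 < r i) :
    (∏ i, phi σ (r i)) ≤ (phi σ ((∏ i, r i) ^ ((1:ℝ)/n)))^n ∧
    ((∏ i, phi σ (r i)) = (phi σ ((∏ i, r i) ^ ((1:ℝ)/n)))^n ↔
      ∀ i j, r i = r j) := by
  have hphi_pos : ∀ ζ, 0 < ζ → 0 < phi σ ζ := fun _ ↦ phi_pos hσ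
  have hphi := strictConcaveOn_log_phi_exp hσ
  have h_le := prod_apply_le_apply_geom_mean_pow hphi_pos hphi.concaveOn hr
  have h_eq := prod_apply_eq_apply_geom_mean_pow_iff hphi_pos hphi hr
  rw [Fintype.card_fin] at h_le h_eq
  exact ⟨h_le, h_eq⟩

theorem stmt10 (σ : ℝ) (hσ : 0 < σ) (n : ℕ) (hn : 1 ≤ n)
    (r : Fin n → ℝ) (hr : ∀ i, 0 < r i) :
    (∏ i, phi σ (r i)) ≤ (phi σ ((∏ i, r i) ^ ((1:ℝ)/n)))^n ∧
    ((∏ i, phi σ (r i)) = (phi σ ((∏ i, r i) ^ ((1:ℝ)/n)))^n ↔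
      ∀ i j, r i = r j) :=
  stmt10_general σ hσ n r hr
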